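/- For an x-preferring CA under no-mistake choice, the ranking {x,y} ≻ y ≻ x holds if and only if φ < 1/2 and π < (1-2φ)/(2(1-φ)): that is, 1 - φ(1-π) > (1-π)(1-φ) > φ + π(1-φ) if and only if φ < 1/2 and π < (1-2φ)/(2(1-φ)), for φ ∈ [0,1) and π ∈ (0,1). -/
import Mathlib

/-- The ranking `{x,y} ≻ y ≻ x` holds iff `φ < 1/2` and `π < (1-2φ)/(2(1-φ))`. -/
theorem freedom_y_x_ranking
    (φ π : ℝ) (hφ : φ ∈ Set.Ico (0:ℝ) 1) (hπ : π ∈ Set.Ioo (0:ℝ) 1) :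
    (1 - φ * (1 - π) > (1 - π) * (1 - φ) ∧
      (1 - π) * (1 - φ) > φ + π * (1 - φ)) ↔
    (φ < 1 / 2 ∧ π < (1 - 2 * φ) / (2 * (1 - φ))) := by
  obtain ⟨h0, h1⟩ := hφ
  obtain ⟨p0, p1⟩ := hπ
  have hd : 0 < 2 * (1 - φ) := by linarith
  rw [lt_div_iff₀ hd]
  constructor
  · rintro ⟨ha, hb⟩
    constructor
    · nlinarith
    · nlinarith
  · rintro ⟨ha, hb⟩
    constructor
    · nlinarith
    · nlinarith
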